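/- arXiv:1706.06707 — 3 statements merged into one kernel-verified Lean document; each statement's English description precedes it below -/
import Mathlib

section
/- Let k be a field, let A = (A_{ij}) be a 4×4 matrix of nonnegative integers with det(A) ≠ 0, and let d be a positive integer such that d·A⁻¹ has integer entries. If λ = (λ₀,λ₁,λ₂,λ₃) ∈ (k×)⁴ satisfies F_A(λ₀x₀, λ₁x₁, λ₂x₂, λ₃x₃) = F_A(x₀,x₁,x₂,x₃) as polynomials, then λ_i^d = 1 for every i; that is, Aut(F_A) is a subgroup of μ_d⁴. -/
open MvPolynomial

/-- The polynomial `F_A` associated to a 4×4 matrix of nonnegative integers. -/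
noncomputable def FA (k : Type*) [CommRing k] (A : Matrix (Fin 4) (Fin 4) ℕ) :
    MvPolynomial (Fin 4) k :=
  ∑ i : Fin 4, ∏ j : Fin 4, (X j : MvPolynomial (Fin 4) k) ^ A i j

/-!
Comparing coefficients, invariance of `F_A` under `xⱼ ↦ λⱼ xⱼ` says that `∏ⱼ λⱼ ^ Aᵢⱼ = 1` for
every row `i` (distinct rows, as `det A ≠ 0`, give distinct monomials). Hence `λ` lies in the kernel
of every character `λ ↦ ∏ⱼ λⱼ ^ vⱼ` with `v` in the row lattice of `A`, and this lattice contains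
`d • eᵢ`, the `i`-th row of the integral matrix `(d • A⁻¹) * A = d • 1`.
-/

open Function

section Monomials

variable {R σ ι : Type*} [CommSemiring R] [Fintype ι]

theorem coeff_sum_monomial_of_injective {s : ι → σ →₀ ℕ} (hs : Injective s) (c : ι → R)
    (i : ι) : coeff (s i) (∑ r, monomial (s r) (c r)) = c i := by
  classical
  rw [coeff_sum, Finset.sum_eq_single i]
  · simp [coeff_monomial]
  · intro r _ hr
    simp [coeff_monomial, hs.ne hr]
  · simp

variable [Fintype σ]

theorem prod_C_mul_X_pow_eq_monomial (c : σ → R) (e : σ → ℕ) :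
    ∏ j, (C (c j) * X j : MvPolynomial σ R) ^ e j =
      monomial (Finsupp.equivFunOnFinite.symm e) (∏ j, c j ^ e j) := by
  rw [monomial_eq, Finsupp.prod_fintype _ _ fun _ => pow_zero _]
  simp [mul_pow, Finset.prod_mul_distrib, map_prod]

theorem prod_X_pow_eq_monomial_equivFunOnFinite (e : σ → ℕ) :
    ∏ j, (X j : MvPolynomial σ R) ^ e j = monomial (Finsupp.equivFunOnFinite.symm e) 1 := by
  simpa using prod_C_mul_X_pow_eq_monomial (1 : σ → R) e

theorem prod_pow_eq_one_of_aeval_C_mul_X_eq {A : Matrix ι σ ℕ} (hA : Injective A) (c : σ → R)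
    (h : aeval (fun j => C (c j) * X j) (∑ i, ∏ j, (X j : MvPolynomial σ R) ^ A i j) =
      ∑ i, ∏ j, (X j : MvPolynomial σ R) ^ A i j) (i : ι) :
    ∏ j, c j ^ A i j = 1 := by
  simp only [map_sum, map_prod, map_pow, aeval_X] at h
  simp only [prod_C_mul_X_pow_eq_monomial, prod_X_pow_eq_monomial_equivFunOnFinite] at h
  have hs : Injective fun r => Finsupp.equivFunOnFinite.symm (A r) :=
    Finsupp.equivFunOnFinite.symm.injective.comp hA
  simpa only [coeff_sum_monomial_of_injective hs] using
    congrArg (coeff (Finsupp.equivFunOnFinite.symm (A i))) h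

end Monomials

namespace Matrix

theorem injective_of_det_map_ne_zero {ι α R : Type*} [Fintype ι] [DecidableEq ι]
    [CommRing R] {A : Matrix ι ι α} (f : α → R) (hA : (A.map f).det ≠ 0) : Injective A := by
  intro i i' h
  by_contra hne
  exact hA (det_zero_of_row_eq hne (funext fun j => by simp [h]))

theorem exists_mul_eq_smul_one_of_det_ne_zero {ι : Type*} [Fintype ι] [DecidableEq ι]
    {A : Matrix ι ι ℤ} (hA : A.det ≠ 0) {d : ℤ}
    (hd : ∀ i j, ∃ z : ℤ, (d : ℚ) * (A.map (Int.cast : ℤ → ℚ))⁻¹ i j = z) :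
    ∃ B : Matrix ι ι ℤ, B * A = d • 1 := by
  choose B hB using hd
  refine ⟨of B, map_injective (Int.cast_injective (α := ℚ)) ?_⟩
  have hdet : IsUnit (A.map (Int.cast : ℤ → ℚ)).det := by
    rw [← Int.cast_det]
    exact (Int.cast_ne_zero.mpr hA).isUnit
  have hBq : (of B).map (Int.cast : ℤ → ℚ) = (d : ℚ) • (A.map (Int.cast : ℤ → ℚ))⁻¹ := by
    ext i j
    simp [hB]
  calc (of B * A).map (Int.cast : ℤ → ℚ)
      = (of B).map (Int.cast : ℤ → ℚ) * A.map (Int.cast : ℤ → ℚ) :=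
        Matrix.map_mul (f := Int.castRingHom ℚ)
    _ = (d : ℚ) • 1 := by rw [hBq, smul_mul_assoc, nonsing_inv_mul _ hdet]
    _ = (d • (1 : Matrix ι ι ℤ)).map (Int.cast : ℤ → ℚ) := by
      ext i j
      simp only [map_apply, smul_apply, one_apply]
      split_ifs <;> simp

end Matrix

section Characters

variable {G ι κ : Type*} [CommGroup G]

theorem zpow_sum (g : G) (s : Finset ι) (f : ι → ℤ) :
    g ^ (∑ i ∈ s, f i) = ∏ i ∈ s, g ^ f i := by
  classical
  induction s using Finset.induction_on with
  | empty => simp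
  | insert a s ha ih => rw [Finset.sum_insert ha, Finset.prod_insert ha, zpow_add, ih]

theorem prod_zpow_vecMul [Fintype ι] [Fintype κ] (g : ι → G) (v : κ → ℤ) (A : Matrix κ ι ℤ) :
    ∏ j, g j ^ Matrix.vecMul v A j = ∏ r, (∏ j, g j ^ A r j) ^ v r := by
  simp only [Matrix.vecMul, dotProduct, zpow_sum, ← Finset.prod_zpow, ← zpow_mul, mul_comm (v _)]
  exact Finset.prod_comm

theorem zpow_eq_one_of_prod_zpow_eq_one [Fintype ι] [DecidableEq ι] [Fintype κ] {g : ι → G}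
    {A : Matrix κ ι ℤ} (hA : ∀ r, ∏ j, g j ^ A r j = 1) {B : Matrix ι κ ℤ} {d : ℤ}
    (hBA : B * A = d • 1) (i : ι) : g i ^ d = 1 := by
  have h := prod_zpow_vecMul g (B i) A
  rw [show Matrix.vecMul (B i) A = (B * A) i from rfl, hBA] at h
  simpa [hA, Matrix.one_apply] using h

end Characters

theorem aut_FA_subset_mu_d_general
    (k : Type*) [Field k] (A : Matrix (Fin 4) (Fin 4) ℕ)
    (hA : (A.map (Nat.cast : ℕ → ℤ)).det ≠ 0)
    (d : ℕ)
    (hdA : ∀ i j, ∃ z : ℤ, (d : ℚ) * ((A.map (Nat.cast : ℕ → ℚ))⁻¹ i j) = (z : ℚ))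
    (lam : Fin 4 → kˣ)
    (hlam : (aeval fun j : Fin 4 => C ((lam j : k)) * X j) (FA k A) = FA k A) :
    ∀ i, (lam i : k) ^ d = 1 := by
  have hAq : (A.map (Nat.cast : ℕ → ℤ)).map (Int.cast : ℤ → ℚ) = A.map Nat.cast := by
    ext i j
    simp
  obtain ⟨B, hBA⟩ :=
    Matrix.exists_mul_eq_smul_one_of_det_ne_zero hA (d := d) (by simpa [hAq] using hdA)
  have hrows : ∀ r, ∏ j, lam j ^ (A.map (Nat.cast : ℕ → ℤ)) r j = 1 := fun r => by
    ext
    simpa using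
      prod_pow_eq_one_of_aeval_C_mul_X_eq (Matrix.injective_of_det_map_ne_zero _ hA) _ hlam r
  intro i
  simpa using congrArg Units.val (zpow_eq_one_of_prod_zpow_eq_one hrows hBA i)

/-- If `det A ≠ 0` and `d·A⁻¹` is an integral matrix, then any `λ ∈ (kˣ)⁴` leaving `F_A`
invariant satisfies `λᵢᵈ = 1` for all `i`; i.e. `Aut(F_A) ⊆ μ_d⁴`. -/
theorem aut_FA_subset_mu_d
    (k : Type*) [Field k] (A : Matrix (Fin 4) (Fin 4) ℕ)
    (hA : (A.map (Nat.cast : ℕ → ℤ)).det ≠ 0)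
    (d : ℕ) (hd : 0 < d)
    (hdA : ∀ i j, ∃ z : ℤ, (d : ℚ) * ((A.map (Nat.cast : ℕ → ℚ))⁻¹ i j) = (z : ℚ))
    (lam : Fin 4 → kˣ)
    (hlam : (aeval fun j : Fin 4 => C ((lam j : k)) * X j) (FA k A) = FA k A) :
    ∀ i, (lam i : k) ^ d = 1 :=
  aut_FA_subset_mu_d_general k A hA d hdA lam hlam
end

section
/- Let k be a field, let A = (A_{ij}) be a 4×4 matrix of nonnegative integers with det(A) ≠ 0, let d be a positive integer such that d·A⁻¹ has integer entries, and assume the characteristic of k does not divide d. Fix a primitive d-th root of unity ζ ∈ k. Then for a = (a₀,a₁,a₂,a₃) ∈ ℤ⁴, the tuple (ζ^{a₀}, ζ^{a₁}, ζ^{a₂}, ζ^{a₃}) belongs to Aut(F_A) if and only if A·aᵀ ≡ 0 (mod d), i.e., every entry of the vector A·aᵀ is divisible by d. -/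
open MvPolynomial

/-!
Scaling `x_j ↦ t_j x_j` multiplies the `i`-th monomial `∏ x_j ^ A i j` of `F_A` by
`∏ t_j ^ A i j`. Since `det A ≠ 0`, the rows of `A` are distinct, so these monomials are distinct
and the scaling fixes `F_A` iff every such factor is `1`. For `t_j = ζ ^ a_j` the factor is
`ζ ^ (A aᵀ)_i`, which is `1` iff `d ∣ (A aᵀ)_i` because `ζ` has order `d`.
-/

theorem Matrix.injective_of_det_map_ne_zero_s3 {n R S : Type*} [Fintype n] [DecidableEq n]
    [CommRing S] (A : Matrix n n R) (f : R → S) (hA : (A.map f).det ≠ 0) :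
    Function.Injective A := by
  intro i i' h
  by_contra hne
  exact hA (Matrix.det_zero_of_row_eq hne (congrArg (f ∘ ·) h))

theorem prod_zpow_pow_eq_zpow_sum {ι G : Type*} [CommGroupWithZero G] {x : G} (hx : x ≠ 0)
    (s : Finset ι) (a : ι → ℤ) (n : ι → ℕ) :
    ∏ j ∈ s, (x ^ a j) ^ n j = x ^ ∑ j ∈ s, (n j : ℤ) * a j := by
  classical
  induction s using Finset.induction_on with
  | empty => simp
  | insert j s hj ih =>
    rw [Finset.prod_insert hj, Finset.sum_insert hj, ih, zpow_add₀ hx, ← zpow_natCast,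
      ← zpow_mul, mul_comm (a j)]

namespace MvPolynomial

variable {σ ι R : Type*} [Fintype σ] [CommSemiring R]

theorem prod_univ_X_pow_eq_monomial (e : σ → ℕ) :
    ∏ j, (X j : MvPolynomial σ R) ^ e j = monomial (Finsupp.equivFunOnFinite.symm e) 1 := by
  rw [monomial_eq, C_1, one_mul, Finsupp.prod_fintype _ _ (fun _ => pow_zero _)]
  rfl

theorem aeval_C_mul_X_prod_X_pow (t : σ → R) (e : σ → ℕ) :
    aeval (fun j => C (t j) * X j) (∏ j, (X j : MvPolynomial σ R) ^ e j) =
      C (∏ j, t j ^ e j) * ∏ j, (X j : MvPolynomial σ R) ^ e j := by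
  simp only [map_prod, map_pow, aeval_X, mul_pow, Finset.prod_mul_distrib]

variable [Fintype ι]

theorem coeff_sum_C_mul_prod_X_pow {e : ι → σ → ℕ} (he : Function.Injective e) (c : ι → R)
    (i : ι) :
    coeff (Finsupp.equivFunOnFinite.symm (e i))
      (∑ i', C (c i') * ∏ j, (X j : MvPolynomial σ R) ^ e i' j) = c i := by
  classical
  simp only [prod_univ_X_pow_eq_monomial, C_mul_monomial, mul_one, coeff_sum, coeff_monomial,
    Finsupp.equivFunOnFinite.symm.injective.eq_iff, he.eq_iff, Finset.sum_ite_eq',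
    Finset.mem_univ, if_true]

theorem aeval_C_mul_X_sum_prod_X_pow_eq_self_iff {e : ι → σ → ℕ} (he : Function.Injective e)
    (t : σ → R) :
    aeval (fun j => C (t j) * X j) (∑ i, ∏ j, (X j : MvPolynomial σ R) ^ e i j) =
        ∑ i, ∏ j, (X j : MvPolynomial σ R) ^ e i j ↔
      ∀ i, ∏ j, t j ^ e i j = 1 := by
  have hself : ∑ i, ∏ j, (X j : MvPolynomial σ R) ^ e i j =
      ∑ i, C 1 * ∏ j, (X j : MvPolynomial σ R) ^ e i j := by simp
  simp only [map_sum, aeval_C_mul_X_prod_X_pow]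
  constructor
  · intro h i
    have hcoeff := congrArg (coeff (Finsupp.equivFunOnFinite.symm (e i))) (h.trans hself)
    rwa [coeff_sum_C_mul_prod_X_pow he, coeff_sum_C_mul_prod_X_pow he] at hcoeff
  · intro h
    simp [h]

end MvPolynomial

theorem zeta_pow_mem_aut_iff_general
    (k : Type*) [Field k] (A : Matrix (Fin 4) (Fin 4) ℕ)
    (hA : (A.map (Nat.cast : ℕ → ℤ)).det ≠ 0)
    (d : ℕ) (hd : 0 < d)
    (ζ : k) (hζ : IsPrimitiveRoot ζ d) (a : Fin 4 → ℤ) :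
    ((aeval fun j : Fin 4 => C (ζ ^ a j) * X j) (FA k A) = FA k A) ↔
      ∀ i, (d : ℤ) ∣ ∑ j, (A i j : ℤ) * a j := by
  rw [FA, aeval_C_mul_X_sum_prod_X_pow_eq_self_iff (A.injective_of_det_map_ne_zero_s3 _ hA)]
  refine forall_congr' fun i => ?_
  rw [prod_zpow_pow_eq_zpow_sum (hζ.ne_zero hd.ne'), hζ.zpow_eq_one_iff_dvd]

/-- With `ζ` a primitive `d`-th root of unity, the tuple `(ζ^{a₀},…,ζ^{a₃})` belongs to
`Aut(F_A)` if and only if `A·aᵀ ≡ 0 (mod d)`. -/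
theorem zeta_pow_mem_aut_iff
    (k : Type*) [Field k] (A : Matrix (Fin 4) (Fin 4) ℕ)
    (hA : (A.map (Nat.cast : ℕ → ℤ)).det ≠ 0)
    (d : ℕ) (hd : 0 < d)
    (hdA : ∀ i j, ∃ z : ℤ, (d : ℚ) * ((A.map (Nat.cast : ℕ → ℚ))⁻¹ i j) = (z : ℚ))
    (hchar : ¬ (ringChar k ∣ d))
    (ζ : k) (hζ : IsPrimitiveRoot ζ d) (a : Fin 4 → ℤ) :
    ((aeval fun j : Fin 4 => C (ζ ^ a j) * X j) (FA k A) = FA k A) ↔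
      ∀ i, (d : ℤ) ∣ ∑ j, (A i j : ℤ) * a j :=
  zeta_pow_mem_aut_iff_general k A hA d hd ζ hζ a
end

section
/- Let d ≥ 1 and let H ⊆ (ℤ/d)⁴ be a subgroup. Suppose that 𝔄_d ∩ H contains exactly one element a₀ of age 1, and let h denote the order of a₀ in the additive group (ℤ/d)⁴. Then 𝔈_d(0) ∩ H = {n·a₀ : 1 ≤ n ≤ h, gcd(n,h) = 1}, and this set has cardinality φ(h), where φ is Euler's totient function. -/
/-!
Every element of `𝔄_d` has integral age `1`, `2` or `3`, and negation exchanges ages `1` and `3`,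
so an element of `𝔄_d` lies in `𝔈_d(0)` exactly when some `(ℤ/d)ˣ`-multiple of it has age `1`.
Since `𝔄_d ∩ H` is stable under units, uniqueness of `a₀` makes `𝔈_d(0) ∩ H` the `(ℤ/d)ˣ`-orbit
of `a₀`. As `h ∣ d` and units of `ℤ/h` lift to units of `ℤ/d`, this orbit consists of the
`n • a₀` with `n` prime to `h`, and these are distinct for `1 ≤ n ≤ h`.
-/

/-- `M_d`: quadruples in `(ℤ/d)⁴` whose coordinates sum to zero, with all coordinates
nonzero (here: the subset `𝔄_d ⊆ M_d`). -/
def frakA (d : ℕ) : Set (Fin 4 → ZMod d) :=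
  {a | (∑ i, a i = 0) ∧ ∀ i, a i ≠ 0}

/-- The age `S(a) = Σᵢ ⟨âᵢ/d⟩`, where `âᵢ ∈ ℤ` is any lift of `aᵢ` (we use the canonical
lift `(a i).val`; the fractional part is independent of the choice of lift). -/
noncomputable def age {d : ℕ} (a : Fin 4 → ZMod d) : ℚ :=
  ∑ i, Int.fract (((a i).val : ℚ) / d)

/-- `𝔅_d(0)`: elements of `𝔄_d` all of whose `(ℤ/d)ˣ`-multiples have age 2. -/
noncomputable def frakB0 (d : ℕ) : Set (Fin 4 → ZMod d) :=
  {a ∈ frakA d | ∀ t : (ZMod d)ˣ, age (fun i => (t : ZMod d) * a i) = 2}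

/-- `𝔈_d(0) = 𝔄_d \ 𝔅_d(0)` (denoted `𝔍_d(0)` in the paper). -/
noncomputable def frakE0 (d : ℕ) : Set (Fin 4 → ZMod d) :=
  frakA d \ frakB0 d

open Finset

section CoprimeMultiples

variable {G : Type*} [AddMonoid G]

def coprimeMultiples (x : G) : Set G :=
  {y | ∃ n : ℕ, 1 ≤ n ∧ n ≤ addOrderOf x ∧ Nat.gcd n (addOrderOf x) = 1 ∧ y = n • x}

theorem mem_coprimeMultiples_iff {x y : G} (hx : IsOfFinAddOrder x) :
    y ∈ coprimeMultiples x ↔ ∃ m : ℕ, m.Coprime (addOrderOf x) ∧ y = m • x := by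
  refine ⟨fun ⟨n, _, _, hn, hy⟩ => ⟨n, hn, hy⟩, fun ⟨m, hm, hy⟩ => ?_⟩
  by_cases hdvd : addOrderOf x ∣ m
  · have h1 : addOrderOf x = 1 := Nat.Coprime.eq_one_of_dvd hm.symm hdvd
    refine ⟨1, le_rfl, h1.ge, by rw [h1, Nat.gcd_one_left], ?_⟩
    rw [hy, AddMonoid.addOrderOf_eq_one_iff.mp h1, nsmul_zero, one_nsmul]
  · refine ⟨m % addOrderOf x, Nat.pos_of_ne_zero fun h0 => hdvd (Nat.dvd_of_mod_eq_zero h0),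
      (Nat.mod_lt _ hx.addOrderOf_pos).le, ?_, by rw [hy, mod_addOrderOf_nsmul]⟩
    rw [← Nat.gcd_rec, Nat.gcd_comm]
    exact hm

theorem ncard_coprimeMultiples (x : G) :
    (coprimeMultiples x).ncard = Nat.totient (addOrderOf x) := by
  set h := addOrderOf x
  have himage : coprimeMultiples x = (· • x) '' (({n ∈ Ico 1 (1 + h) | h.Coprime n} : Finset ℕ) : Set ℕ) := by
    ext y
    simp only [coprimeMultiples, Set.mem_ofPred_eq, coe_filter, mem_Ico, Set.mem_image]
    constructor
    · rintro ⟨n, hn1, hnh, hn, rfl⟩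
      exact ⟨n, ⟨⟨hn1, by omega⟩, Nat.coprime_comm.mp hn⟩, rfl⟩
    · rintro ⟨n, ⟨⟨hn1, hnh⟩, hn⟩, rfl⟩
      exact ⟨n, hn1, by omega, Nat.coprime_comm.mp hn, rfl⟩
  rw [himage, Set.InjOn.ncard_image, Set.ncard_coe_finset, Nat.filter_coprime_Ico_eq_totient]
  intro n hn m hm (hnm : n • x = m • x)
  simp only [coe_filter, mem_Ico, Set.mem_ofPred_eq] at hn hm
  have hx : IsOfFinAddOrder x := addOrderOf_pos_iff.mp (by omega)
  refine (hx.nsmul_eq_nsmul_iff_modEq.mp hnm).eq_of_abs_lt (abs_sub_lt_iff.mpr ⟨?_, ?_⟩) <;> omega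

end CoprimeMultiples

section ZModModule

variable {d : ℕ} {M : Type*} [AddCommGroup M] [Module (ZMod d) M]

theorem addOrderOf_dvd_of_zmodModule (x : M) : addOrderOf x ∣ d :=
  addOrderOf_dvd_of_nsmul_eq_zero <| by
    rw [← Nat.cast_smul_eq_nsmul (ZMod d), ZMod.natCast_self, zero_smul]

theorem ZMod.val_nsmul_eq_smul [NeZero d] (c : ZMod d) (x : M) : c.val • x = c • x := by
  rw [← Nat.cast_smul_eq_nsmul (ZMod d), ZMod.natCast_zmod_val]

theorem orbit_units_zmod_eq_coprimeMultiples [NeZero d] (x : M) :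
    MulAction.orbit (ZMod d)ˣ x = coprimeMultiples x := by
  have hdvd : addOrderOf x ∣ d := addOrderOf_dvd_of_zmodModule x
  have hx : IsOfFinAddOrder x := addOrderOf_pos_iff.mp (Nat.pos_of_dvd_of_pos hdvd (NeZero.pos d))
  ext y
  rw [MulAction.mem_orbit_iff, mem_coprimeMultiples_iff hx]
  constructor
  · rintro ⟨u, rfl⟩
    exact ⟨(u : ZMod d).val, (ZMod.val_coe_unit_coprime u).coprime_dvd_right hdvd,
      by rw [Units.smul_def, ZMod.val_nsmul_eq_smul]⟩
  · rintro ⟨m, hm, rfl⟩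
    obtain ⟨u, hu⟩ := ZMod.unitsMap_surjective hdvd (ZMod.unitOfCoprime m hm)
    refine ⟨u, ?_⟩
    have hcast : (((u : ZMod d).val : ℕ) : ZMod (addOrderOf x)) = m := by
      rw [ZMod.natCast_val, ← ZMod.unitsMap_val hdvd, hu, ZMod.coe_unitOfCoprime]
    rw [Units.smul_def, ← ZMod.val_nsmul_eq_smul]
    exact nsmul_eq_nsmul_iff_modEq.mpr ((ZMod.natCast_eq_natCast_iff' _ _ _).mp hcast)

end ZModModule

section Age

variable {d : ℕ} {a : Fin 4 → ZMod d}

theorem units_smul_mem_frakA (t : (ZMod d)ˣ) (ha : a ∈ frakA d) : t • a ∈ frakA d := by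
  refine ⟨?_, fun i => ?_⟩
  · simp only [Pi.smul_apply, ← smul_sum, ha.1, smul_zero]
  · simpa only [Pi.smul_apply, ne_eq, smul_eq_zero_iff_eq] using ha.2 i

theorem age_eq_sum_val_div [NeZero d] (a : Fin 4 → ZMod d) :
    age a = (∑ i, ((a i).val : ℚ)) / d := by
  rw [age, sum_div]
  refine sum_congr rfl fun i _ => Int.fract_eq_self.mpr ⟨by positivity, ?_⟩
  rw [div_lt_one (by exact_mod_cast NeZero.pos d)]
  exact_mod_cast (a i).val_lt

theorem age_eq_one_or_eq_two_or_eq_three [NeZero d] (ha : a ∈ frakA d) :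
    age a = 1 ∨ age a = 2 ∨ age a = 3 := by
  obtain ⟨k, hk⟩ : d ∣ ∑ i, (a i).val := by
    rw [← ZMod.natCast_eq_zero_iff]
    push_cast [ZMod.natCast_zmod_val]
    exact ha.1
  have hpos : 0 < ∑ i, (a i).val :=
    sum_pos (fun i _ => ZMod.val_pos.mpr (ha.2 i)) univ_nonempty
  have hlt : ∑ i, (a i).val < d * 4 :=
    calc _ < ∑ _i : Fin 4, d := sum_lt_sum_of_nonempty univ_nonempty fun i _ => (a i).val_lt
      _ = d * 4 := by simp [mul_comm]
  have hage : age a = k := by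
    rw [age_eq_sum_val_div, ← Nat.cast_sum, hk]
    push_cast
    field_simp [(NeZero.pos d).ne']
  rw [hk] at hpos hlt
  have hk0 : 0 < k := Nat.pos_of_mul_pos_left hpos
  have hk4 : k < 4 := Nat.lt_of_mul_lt_mul_left hlt
  interval_cases k <;> simp [hage]

theorem age_neg [NeZero d] (ha : a ∈ frakA d) : age (-a) = 4 - age a := by
  have hval : ∀ i, (((-a) i).val : ℚ) = d - (a i).val := fun i => by
    rw [Pi.neg_apply, ZMod.neg_val, if_neg (ha.2 i), Nat.cast_sub (a i).val_lt.le]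
  have hd : (d : ℚ) ≠ 0 := by exact_mod_cast NeZero.ne d
  simp only [age_eq_sum_val_div, hval, sum_sub_distrib, sum_const, card_univ, Fintype.card_fin]
  field_simp
  ring

theorem mem_frakE0_iff [NeZero d] :
    a ∈ frakE0 d ↔ a ∈ frakA d ∧ ∃ t : (ZMod d)ˣ, age (t • a) = 1 := by
  constructor
  · rintro ⟨ha, hnB⟩
    obtain ⟨t, ht⟩ : ∃ t : (ZMod d)ˣ, age (t • a) ≠ 2 := by
      by_contra! h
      exact hnB ⟨ha, h⟩
    have hta := units_smul_mem_frakA t ha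
    refine ⟨ha, ?_⟩
    rcases age_eq_one_or_eq_two_or_eq_three hta with h1 | h2 | h3
    · exact ⟨t, h1⟩
    · exact absurd h2 ht
    · refine ⟨-t, ?_⟩
      rw [Units.neg_smul, age_neg hta, h3]
      norm_num
  · rintro ⟨ha, t, ht⟩
    refine ⟨ha, fun hB => ?_⟩
    -- `t • a` unfolds to the `fun i => t * a i` of `frakB0`
    have h2 : age (t • a) = 2 := hB.2 t
    rw [ht] at h2
    norm_num at h2

end Age

theorem frakE0_inter_eq_orbit_units {d : ℕ} [NeZero d] {H : AddSubgroup (Fin 4 → ZMod d)}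
    {a₀ : Fin 4 → ZMod d} (ha₀A : a₀ ∈ frakA d) (ha₀H : a₀ ∈ H) (hage : age a₀ = 1)
    (huniq : ∀ b, b ∈ frakA d → b ∈ H → age b = 1 → b = a₀) :
    frakE0 d ∩ H = MulAction.orbit (ZMod d)ˣ a₀ := by
  have hsmul : ∀ (t : (ZMod d)ˣ) {a}, a ∈ H → t • a ∈ H := fun t _ ha =>
    (AddSubgroup.toZModSubmodule d H).smul_of_tower_mem t ha
  ext a
  constructor
  · rintro ⟨ha, haH⟩
    obtain ⟨haA, t, ht⟩ := mem_frakE0_iff.mp ha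
    have hta : t • a = a₀ := huniq _ (units_smul_mem_frakA t haA) (hsmul t haH) ht
    exact ⟨t⁻¹, show t⁻¹ • a₀ = a by rw [← hta, inv_smul_smul]⟩
  · rintro ⟨u, rfl⟩
    exact ⟨mem_frakE0_iff.mpr ⟨units_smul_mem_frakA u ha₀A, u⁻¹, by rwa [inv_smul_smul]⟩,
      hsmul u ha₀H⟩

/-- If `𝔄_d ∩ H` contains exactly one element `a₀` of age 1, and `h` is the additive order of
`a₀`, then `𝔈_d(0) ∩ H = {n·a₀ : 1 ≤ n ≤ h, gcd(n,h) = 1}`, a set of cardinality `φ(h)`. -/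
theorem frakE0_inter_eq_orbit (d : ℕ) (hd : 1 ≤ d) (H : AddSubgroup (Fin 4 → ZMod d))
    (a₀ : Fin 4 → ZMod d) (ha₀A : a₀ ∈ frakA d) (ha₀H : a₀ ∈ H) (hage : age a₀ = 1)
    (huniq : ∀ b, b ∈ frakA d → b ∈ H → age b = 1 → b = a₀) :
    frakE0 d ∩ H =
      {x | ∃ n : ℕ, 1 ≤ n ∧ n ≤ addOrderOf a₀ ∧ Nat.gcd n (addOrderOf a₀) = 1 ∧ x = n • a₀} ∧
    (frakE0 d ∩ H).ncard = Nat.totient (addOrderOf a₀) := by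
  have : NeZero d := ⟨by omega⟩
  have horbit : frakE0 d ∩ H = coprimeMultiples a₀ := by
    rw [frakE0_inter_eq_orbit_units ha₀A ha₀H hage huniq, orbit_units_zmod_eq_coprimeMultiples]
  exact ⟨horbit, by rw [horbit, ncard_coprimeMultiples]⟩
end
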